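/- Let X ⊆ 2^ω. The branch family A_X = {a_x : x ∈ X} on 2^{<ω} is strongly (ℵ₀, c)-separated (every countable subfamily B can be separated by a partitioner from A_X∖B) if and only if X is a λ-set (every countable subset of X is G_δ relative to X). -/

import Mathlib

open Set Topology

/-- The length-n initial segment of x : ℕ → Bool as a finite binary sequence. -/
def res (x : ℕ → Bool) (n : ℕ) : List Bool := (List.range n).map x

/-- The branch a_x = {x↾n : n ∈ ω} ⊆ 2^{<ω}. -/
def branch (x : ℕ → Bool) : Set (List Bool) := Set.range (res x)

/-- Y is a relative G_δ subset of X. -/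
def IsRelGdelta {α : Type*} [TopologicalSpace α] (X Y : Set α) : Prop :=
  ∃ U : ℕ → Set α, (∀ n, IsOpen (U n)) ∧ Y = X ∩ ⋂ n, U n

/-- Y is a relative F_σ subset of X. -/
def IsRelFsigma {α : Type*} [TopologicalSpace α] (X Y : Set α) : Prop :=
  ∃ C : ℕ → Set α, (∀ n, IsClosed (C n)) ∧ Y = X ∩ ⋃ n, C n

/-- Z is a weak λ-set. -/
def IsWeakLambda {α : Type*} [TopologicalSpace α] (Z : Set α) : Prop :=
  ∀ Y W : Set α, Y ⊆ Z → W ⊆ Z → Y.Countable → W.Countable → Disjoint Y W →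
    ∃ H ⊆ Z, IsRelGdelta Z H ∧ IsRelFsigma Z H ∧ Y ⊆ H ∧ W ⊆ Z \ H

/-- S is an F_σ subset of the whole space. -/
def IsFsigma {α : Type*} [TopologicalSpace α] (S : Set α) : Prop :=
  ∃ C : ℕ → Set α, (∀ n, IsClosed (C n)) ∧ S = ⋃ n, C n

/-!
Given a partitioner `Z` for the branches of a countable `Y ⊆ X`, `Y` is the set of `x ∈ X` with
`x↾n ∈ Z` for infinitely many `n`, a relative `G_δ` since each `{x | x↾n ∈ Z}` is open.
Conversely, if `Y = X ∩ ⋂ₖ Uₖ` with `Y = {y₀, y₁, …}`, let `Z` consist of the `yᵢ↾n` with `n` so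
large that the cylinder of `yᵢ↾n` lies in `U₀ ∩ ⋯ ∩ Uᵢ`. A point outside `Uₖ` can then only share
levels of `Z` with `y₀, …, yₖ₋₁`, and with each of them only finitely many.
-/

lemma length_res (x : ℕ → Bool) (n : ℕ) : (res x n).length = n := by simp [res]

lemma res_injective (x : ℕ → Bool) : Function.Injective (res x) := fun m n h => by
  simpa [length_res] using congrArg List.length h

lemma res_eq_res_iff_mem_cylinder {x y : ℕ → Bool} {n : ℕ} :
    res y n = res x n ↔ y ∈ PiNat.cylinder x n := by
  simp [res, PiNat.mem_cylinder_iff]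

lemma branch_injective : Function.Injective branch := by
  intro x y h
  funext n
  obtain ⟨m, hm⟩ : res x (n + 1) ∈ branch y := h ▸ mem_range_self _
  obtain rfl : m = n + 1 := by simpa [length_res] using congrArg List.length hm
  exact PiNat.mem_cylinder_iff.1 (res_eq_res_iff_mem_cylinder.1 hm) n n.lt_succ_self |>.symm

lemma finite_branch_inter_iff (x : ℕ → Bool) (Z : Set (List Bool)) :
    (branch x ∩ Z).Finite ↔ (res x ⁻¹' Z).Finite := by
  rw [branch, ← image_preimage_eq_range_inter, finite_image_iff (res_injective x).injOn]

lemma finite_branch_diff_iff (x : ℕ → Bool) (Z : Set (List Bool)) :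
    (branch x \ Z).Finite ↔ (res x ⁻¹' Z)ᶜ.Finite := by
  rw [sdiff_eq, finite_branch_inter_iff, preimage_compl]

lemma finite_setOf_mem_cylinder {x y : ℕ → Bool} (h : x ≠ y) :
    {n | x ∈ PiNat.cylinder y n}.Finite :=
  (finite_Iic (PiNat.firstDiff x y)).subset fun _ hn => (PiNat.mem_cylinder_iff_le_firstDiff h _).1 hn

lemma PiNat.exists_cylinder_subset_of_isOpen {E : ℕ → Type*} [∀ n, TopologicalSpace (E n)]
    [∀ n, DiscreteTopology (E n)] {s : Set (∀ n, E n)} (hs : IsOpen s) {x : ∀ n, E n}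
    (hx : x ∈ s) : ∃ n, PiNat.cylinder x n ⊆ s := by
  obtain ⟨_, ⟨z, n, rfl⟩, hxz, hzs⟩ :=
    (PiNat.isTopologicalBasis_cylinders E).exists_subset_of_mem_open hx hs
  exact ⟨n, PiNat.mem_cylinder_iff_eq.1 hxz ▸ hzs⟩

lemma isOpen_setOf_res_mem (n : ℕ) (Z : Set (List Bool)) : IsOpen {x | res x n ∈ Z} :=
  isOpen_iff_forall_mem_open.2 fun x hx =>
    ⟨PiNat.cylinder x n, fun y hy => by simpa [res_eq_res_iff_mem_cylinder.2 hy] using hx,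
      PiNat.isOpen_cylinder _ x n, PiNat.self_mem_cylinder x n⟩

lemma isRelGdelta_inter_setOf_infinite (X : Set (ℕ → Bool)) (Z : Set (List Bool)) :
    IsRelGdelta X (X ∩ {x | (res x ⁻¹' Z).Infinite}) := by
  refine ⟨fun n => ⋃ m > n, {x | res x m ∈ Z},
    fun n => isOpen_biUnion fun m _ => isOpen_setOf_res_mem m Z, ?_⟩
  ext x
  simp [infinite_iff_exists_gt, and_comm]

lemma isRelGdelta_of_partitioner {X Y : Set (ℕ → Bool)} (hYX : Y ⊆ X) (Z : Set (List Bool))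
    (hY : ∀ y ∈ Y, (branch y \ Z).Finite) (hXY : ∀ x ∈ X \ Y, (branch x ∩ Z).Finite) :
    IsRelGdelta X Y := by
  convert isRelGdelta_inter_setOf_infinite X Z using 1
  ext x
  refine ⟨fun hx => ⟨hYX hx, fun hfin => ?_⟩, fun ⟨hxX, hinf⟩ => ?_⟩
  · exact infinite_univ ((hfin.union ((finite_branch_diff_iff x Z).1 (hY x hx))).subset
      (by simp))
  · by_contra hxY
    exact hinf ((finite_branch_inter_iff x Z).1 (hXY x ⟨hxX, hxY⟩))

lemma exists_partitioner_of_subset_iInter {Y : Set (ℕ → Bool)} (hY : Y.Countable)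
    {U : ℕ → Set (ℕ → Bool)} (hU : ∀ n, IsOpen (U n)) (hYU : Y ⊆ ⋂ n, U n) :
    ∃ Z : Set (List Bool), (∀ y ∈ Y, (branch y \ Z).Finite) ∧
      ∀ x ∉ ⋂ n, U n, (branch x ∩ Z).Finite := by
  have : Countable Y := hY
  obtain ⟨e, he⟩ := Countable.exists_injective_nat Y
  have hN (y : Y) : ∃ N, PiNat.cylinder (y : ℕ → Bool) N ⊆ ⋂ m ∈ Iic (e y), U m :=
    PiNat.exists_cylinder_subset_of_isOpen ((finite_Iic _).isOpen_biInter fun m _ => hU m)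
      (mem_biInter fun m _ => mem_iInter.1 (hYU y.2) m)
  choose N hN using hN
  refine ⟨{s | ∃ y : Y, N y ≤ s.length ∧ s = res y s.length}, fun y hy => ?_, fun x hx => ?_⟩
  · rw [finite_branch_diff_iff]
    refine (finite_Iio (N ⟨y, hy⟩)).subset fun n hn => ?_
    by_contra hlt
    exact hn ⟨⟨y, hy⟩, by simpa [length_res] using hlt⟩
  · obtain ⟨k, hk⟩ : ∃ k, x ∉ U k := by simpa using hx
    rw [finite_branch_inter_iff]
    refine (((finite_Iio k).preimage he.injOn).biUnion fun y _ =>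
      finite_setOf_mem_cylinder (y := y) fun hxy => hx (hxy ▸ hYU y.2 :)).subset ?_
    rintro n ⟨y, hNy, hxy⟩
    simp only [length_res] at hNy hxy
    have hxU : x ∈ ⋂ m ∈ Iic (e y), U m :=
      hN y (PiNat.cylinder_anti _ hNy (res_eq_res_iff_mem_cylinder.1 hxy))
    have hek : e y < k := not_le.1 fun hke => hk (mem_iInter₂.1 hxU k hke)
    exact mem_biUnion (x := y) hek (res_eq_res_iff_mem_cylinder.1 hxy)

theorem stmt10 (X : Set (ℕ → Bool)) :
    (∀ B ⊆ branch '' X, B.Countable →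
      ∃ Z : Set (List Bool),
        (∀ a ∈ B, (a \ Z).Finite) ∧ (∀ a ∈ (branch '' X) \ B, (a ∩ Z).Finite)) ↔
      (∀ Y ⊆ X, Y.Countable → IsRelGdelta X Y) := by
  constructor
  · intro h Y hYX hYc
    obtain ⟨Z, hYZ, hXYZ⟩ := h (branch '' Y) (image_mono hYX) (hYc.image _)
    refine isRelGdelta_of_partitioner hYX Z (fun y hy => hYZ _ (mem_image_of_mem _ hy)) ?_
    exact fun x hx => hXYZ _ ⟨mem_image_of_mem _ hx.1, branch_injective.mem_set_image.not.2 hx.2⟩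
  · intro h B hBX hBc
    set Y := X ∩ branch ⁻¹' B
    have hYc : Y.Countable := (hBc.preimage branch_injective).mono inter_subset_right
    obtain ⟨U, hU, hYU⟩ := h Y inter_subset_left hYc
    obtain ⟨Z, hYZ, hZ⟩ := exists_partitioner_of_subset_iInter hYc hU (hYU ▸ inter_subset_right)
    refine ⟨Z, fun a ha => ?_, ?_⟩
    · obtain ⟨x, hx, rfl⟩ := hBX ha
      exact hYZ x ⟨hx, ha⟩
    · rintro _ ⟨⟨x, hx, rfl⟩, hxB⟩
      exact hZ x fun hxU => hxB (hYU ▸ ⟨hx, hxU⟩ : x ∈ Y).2
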